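/- arXiv:2101.01505 — 4 statements merged into one kernel-verified Lean document; each statement's English description precedes it below -/
import Mathlib

section
/- Let A ⊆ R^p be a nonempty closed convex set and let P_A(x) = argmin_{y∈A} ||y−x||² denote the metric projection onto A (which is well defined and single-valued). If P_A(x+y) = P_A(x) + P_A(y) for all x, y ∈ R^p, then A is a linear subspace of R^p. -/
/-!
A projection fixes every point of `S`, so `S` is the range of `P`; when `P` is additive this
range is an additive subgroup. A convex additive subgroup of a real vector space is closed under
all real scalings: `t • x` with `0 ≤ t ≤ n` is a convex combination of `0` and `n • x`, and
negative scalars come from `-x`.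
-/

namespace AddSubgroup

variable {E : Type*} [AddCommGroup E] [Module ℝ E]

theorem smul_mem_of_convex (G : AddSubgroup E) (hG : Convex ℝ (G : Set E)) {x : E} (hx : x ∈ G)
    (c : ℝ) : c • x ∈ G := by
  have nonneg : ∀ t : ℝ, 0 ≤ t → ∀ y ∈ G, t • y ∈ G := by
    intro t ht y hy
    obtain ⟨n, hn⟩ := exists_nat_gt t
    have hn0 : (0 : ℝ) < n := ht.trans_lt hn
    have hmem : (t / n) • ((n : ℝ) • y) ∈ G :=
      hG.smul_mem_of_zero_mem G.zero_mem (by rw [Nat.cast_smul_eq_nsmul]; exact G.nsmul_mem hy n)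
        ⟨div_nonneg ht hn0.le, (div_le_one hn0).2 hn.le⟩
    rwa [smul_smul, div_mul_cancel₀ t hn0.ne'] at hmem
  rcases le_total 0 c with hc | hc
  · exact nonneg c hc x hx
  · simpa using nonneg (-c) (neg_nonneg.2 hc) (-x) (G.neg_mem hx)

def toSubmoduleOfConvex (G : AddSubgroup E) (hG : Convex ℝ (G : Set E)) : Submodule ℝ E where
  __ := G
  smul_mem' c _ hx := G.smul_mem_of_convex hG hx c

end AddSubgroup

theorem statement1_general (p : ℕ) (S : Set (EuclideanSpace ℝ (Fin p)))
    (hconv : Convex ℝ S)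
    (P : EuclideanSpace ℝ (Fin p) → EuclideanSpace ℝ (Fin p))
    (hPmem : ∀ x, P x ∈ S)
    (hPmin : ∀ x, ∀ y ∈ S, ‖P x - x‖ ≤ ‖y - x‖)
    (hadd : ∀ x y, P (x + y) = P x + P y) :
    ∃ V : Submodule ℝ (EuclideanSpace ℝ (Fin p)), S = (V : Set (EuclideanSpace ℝ (Fin p))) := by
  have hfix : ∀ s ∈ S, P s = s := fun s hs => by
    simpa [sub_eq_zero] using hPmin s s hs
  let f := AddMonoidHom.mk' P hadd
  have hS : S = f.range := by
    ext s
    refine ⟨fun hs => ⟨s, hfix s hs⟩, ?_⟩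
    rintro ⟨x, rfl⟩
    exact hPmem x
  exact ⟨f.range.toSubmoduleOfConvex (hS ▸ hconv), hS⟩

/-- If `S ⊆ ℝ^p` is a nonempty closed convex set and the metric
projection `P` onto `S` (the map sending `x` to the unique closest point of `S`)
is additive, i.e. `P (x + y) = P x + P y` for all `x, y`, then `S` is a linear
subspace of `ℝ^p`. -/
theorem statement1 (p : ℕ) (S : Set (EuclideanSpace ℝ (Fin p)))
    (hne : S.Nonempty) (hclosed : IsClosed S) (hconv : Convex ℝ S)
    (P : EuclideanSpace ℝ (Fin p) → EuclideanSpace ℝ (Fin p))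
    (hPmem : ∀ x, P x ∈ S)
    (hPmin : ∀ x, ∀ y ∈ S, ‖P x - x‖ ≤ ‖y - x‖)
    (hadd : ∀ x y, P (x + y) = P x + P y) :
    ∃ V : Submodule ℝ (EuclideanSpace ℝ (Fin p)), S = (V : Set (EuclideanSpace ℝ (Fin p))) :=
  statement1_general p S hconv P hPmem hPmin hadd
end

section
/- Let (r_t)_{t≥0}, (u_t)_{t≥0} and (δ_t)_{t≥0} be nonnegative real sequences, let η > 0, let a_1, a_2, a_3, b_1, b_2, c_1, c_2 ≥ 0, and suppose for all t ≥ 0: r_{t+1} ≤ a_1 r_t + a_2 u_t − η δ_t b_1 + η² c_1 and u_{t+1} ≤ a_3 u_t + η δ_t b_2 + η² c_2 (that is, componentwise L_{t+1} ≤ A L_t − η δ_t b + η² c with L_t = (r_t, u_t)ᵀ, A = [[a_1, a_2],[0, a_3]], b = (b_1, −b_2)ᵀ, c = (c_1, c_2)ᵀ). Define κ_i = i a_1^{i−1} if a_1 = a_3, and κ_i = (a_1^i − a_3^i)/(a_1 − a_3) if a_1 ≠ a_3; then κ_i ≤ i·max{a_1,a_3}^{i−1}. Fix an integer E ≥ 1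 and times 0 ≤ t_0 ≤ t_1 ≤ t_0 + E with s_0 = t_1 − t_0; if a_1^i b_1 ≥ 2 a_2 b_2 κ_i for all 0 ≤ i ≤ E−1, then r_{t_1} ≤ a_1^{s_0} r_{t_0} + κ_{s_0} a_2 u_{t_0} − (η/2) Σ_{i=0}^{s_0−1} δ_{t_1−i−1} a_1^i b_1 + η² Σ_{i=0}^{s_0−1} [a_1^i c_1 + κ_i a_2 c_2]. -/
/-- **error propagation.** Nonnegative sequences `r, u, δ` satisfying the
componentwise recursion `L_{t+1} ≤ A L_t - η δ_t b + η² c` with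
`L_t = (r_t, u_t)ᵀ`, `A = [[a1, a2], [0, a3]]`, `b = (b1, -b2)ᵀ`, `c = (c1, c2)ᵀ`, all
constants nonnegative and `η > 0`.  With `κ_i = i a1^{i-1}` if `a1 = a3` and
`κ_i = (a1^i - a3^i)/(a1 - a3)` otherwise, one has `κ_i ≤ i · max{a1,a3}^{i-1}`;
moreover, for `t0 ≤ t1 ≤ t0 + E` with `s0 = t1 - t0`, if `a1^i b1 ≥ 2 a2 b2 κ_i`
for all `0 ≤ i ≤ E - 1`, then
`r_{t1} ≤ a1^{s0} r_{t0} + κ_{s0} a2 u_{t0} - (η/2) Σ_{i<s0} δ_{t1-i-1} a1^i b1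
  + η² Σ_{i<s0} (a1^i c1 + κ_i a2 c2)`. -/
theorem statement10 (r u δ : ℕ → ℝ)
    (hrpos : ∀ t, 0 ≤ r t) (hupos : ∀ t, 0 ≤ u t) (hδpos : ∀ t, 0 ≤ δ t)
    (η a1 a2 a3 b1 b2 c1 c2 : ℝ) (hη : 0 < η)
    (ha1 : 0 ≤ a1) (ha2 : 0 ≤ a2) (ha3 : 0 ≤ a3)
    (hb1 : 0 ≤ b1) (hb2 : 0 ≤ b2) (hc1 : 0 ≤ c1) (hc2 : 0 ≤ c2)
    (hrrec : ∀ t, r (t + 1) ≤ a1 * r t + a2 * u t - η * δ t * b1 + η ^ 2 * c1)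
    (hurec : ∀ t, u (t + 1) ≤ a3 * u t + η * δ t * b2 + η ^ 2 * c2)
    (κ : ℕ → ℝ)
    (hκ : ∀ i : ℕ, κ i =
      if a1 = a3 then (i : ℝ) * a1 ^ (i - 1)
      else (a1 ^ i - a3 ^ i) / (a1 - a3))
    (E : ℕ) (hE : 1 ≤ E)
    (t0 t1 : ℕ) (ht01 : t0 ≤ t1) (ht1 : t1 ≤ t0 + E)
    (hcond : ∀ i < E, a1 ^ i * b1 ≥ 2 * a2 * b2 * κ i) :
    (∀ i : ℕ, κ i ≤ (i : ℝ) * max a1 a3 ^ (i - 1)) ∧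
    r t1 ≤ a1 ^ (t1 - t0) * r t0 + κ (t1 - t0) * a2 * u t0
      - (η / 2) * ∑ i ∈ Finset.range (t1 - t0), δ (t1 - i - 1) * a1 ^ i * b1
      + η ^ 2 * ∑ i ∈ Finset.range (t1 - t0), (a1 ^ i * c1 + κ i * a2 * c2) := by
  have hκ0 : κ 0 = 0 := by rw [hκ]; split <;> simp
  have hκs : ∀ i : ℕ, κ (i + 1) = a1 * κ i + a3 ^ i := by
    intro i
    rw [hκ, hκ]
    split
    next h =>
      subst h
      cases i with
      | zero => simp
      | succ n =>
        have h1 : (n + 1 + 1 : ℕ) - 1 = n + 1 := rfl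
        have h2 : (n + 1 : ℕ) - 1 = n := rfl
        rw [h1, h2]
        push_cast
        ring
    next h =>
      have hne : a1 - a3 ≠ 0 := sub_ne_zero.mpr h
      field_simp
      ring
  have hκnn : ∀ i : ℕ, 0 ≤ κ i := by
    intro i
    induction i with
    | zero => rw [hκ0]
    | succ n ih => rw [hκs]; positivity
  constructor
  · intro i
    rw [hκ i]
    split
    next h =>
      exact mul_le_mul_of_nonneg_left
        (pow_le_pow_left₀ ha1 (le_max_left a1 a3) _) (Nat.cast_nonneg i)
    next h =>
      have hne : a1 - a3 ≠ 0 := sub_ne_zero.mpr h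
      have hg := geom_sum₂_mul a1 a3 i
      rw [← hg, mul_div_cancel_right₀ _ hne]
      calc ∑ j ∈ Finset.range i, a1 ^ j * a3 ^ (i - 1 - j)
          ≤ ∑ j ∈ Finset.range i, max a1 a3 ^ (i - 1) := by
            apply Finset.sum_le_sum
            intro j hj
            have hji : j < i := Finset.mem_range.mp hj
            have : max a1 a3 ^ (i - 1) = max a1 a3 ^ j * max a1 a3 ^ (i - 1 - j) := by
              rw [← pow_add]; congr 1; omega
            rw [this]
            exact mul_le_mul (pow_le_pow_left₀ ha1 (le_max_left a1 a3) _)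
              (pow_le_pow_left₀ ha3 (le_max_right a1 a3) _)
              (pow_nonneg ha3 _) (pow_nonneg (le_trans ha1 (le_max_left a1 a3)) _)
        _ = (i : ℝ) * max a1 a3 ^ (i - 1) := by
            simp [Finset.sum_const, Finset.card_range, nsmul_eq_mul]
  · have shift : ∀ (f : ℕ → ℝ) (s : ℕ),
        ∑ i ∈ Finset.range (s + 1), δ (t0 + (s + 1) - i - 1) * f i
          = δ (t0 + s) * f 0 + ∑ i ∈ Finset.range s, δ (t0 + s - i - 1) * f (i + 1) := by
      intro f s
      rw [Finset.sum_range_succ', add_comm]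
      congr 1
      · apply Finset.sum_congr rfl
        intro i hi
        have h1 : t0 + (s + 1) - (i + 1) - 1 = t0 + s - i - 1 := by omega
        rw [h1]
    have key : ∀ s : ℕ,
        u (t0 + s) ≤ a3 ^ s * u t0
          + η * b2 * ∑ i ∈ Finset.range s, δ (t0 + s - i - 1) * a3 ^ i
          + η ^ 2 * c2 * ∑ i ∈ Finset.range s, a3 ^ i
        ∧ r (t0 + s) ≤ a1 ^ s * r t0 + κ s * a2 * u t0
          - η * ∑ i ∈ Finset.range s, δ (t0 + s - i - 1) * (a1 ^ i * b1 - κ i * a2 * b2)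
          + η ^ 2 * ∑ i ∈ Finset.range s, (a1 ^ i * c1 + κ i * a2 * c2) := by
      intro s
      induction s with
      | zero => simp [hκ0]
      | succ s ih =>
        obtain ⟨ihu, ihr⟩ := ih
        have hgeom : ∑ i ∈ Finset.range (s + 1), a3 ^ i
            = a3 * ∑ i ∈ Finset.range s, a3 ^ i + 1 := geom_sum_succ
        have hsu : ∑ i ∈ Finset.range (s + 1), δ (t0 + (s + 1) - i - 1) * a3 ^ i
            = δ (t0 + s) + a3 * ∑ i ∈ Finset.range s, δ (t0 + s - i - 1) * a3 ^ i := by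
          rw [shift (fun i => a3 ^ i) s, Finset.mul_sum]
          simp only [pow_zero, mul_one]
          congr 1
          exact Finset.sum_congr rfl fun i _ => by ring
        have hsr : ∑ i ∈ Finset.range (s + 1), δ (t0 + (s + 1) - i - 1)
              * (a1 ^ i * b1 - κ i * a2 * b2)
            = δ (t0 + s) * b1
              + (a1 * ∑ i ∈ Finset.range s, δ (t0 + s - i - 1) * (a1 ^ i * b1 - κ i * a2 * b2)
                 - a2 * b2 * ∑ i ∈ Finset.range s, δ (t0 + s - i - 1) * a3 ^ i) := by
          rw [shift (fun i => a1 ^ i * b1 - κ i * a2 * b2) s]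
          simp only [pow_zero, one_mul, hκ0, zero_mul, sub_zero]
          congr 1
          rw [Finset.mul_sum, Finset.mul_sum, ← Finset.sum_sub_distrib]
          exact Finset.sum_congr rfl fun i _ => by rw [hκs]; ring
        have hcr : ∑ i ∈ Finset.range (s + 1), (a1 ^ i * c1 + κ i * a2 * c2)
            = (c1
              + (a1 * ∑ i ∈ Finset.range s, (a1 ^ i * c1 + κ i * a2 * c2)
                 + a2 * c2 * ∑ i ∈ Finset.range s, a3 ^ i)) := by
          rw [Finset.sum_range_succ', add_comm]
          congr 1
          · simp [hκ0]
          · rw [Finset.mul_sum, Finset.mul_sum, ← Finset.sum_add_distrib]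
            exact Finset.sum_congr rfl fun i _ => by rw [hκs]; ring
        constructor
        · calc u (t0 + (s + 1))
              ≤ a3 * u (t0 + s) + η * δ (t0 + s) * b2 + η ^ 2 * c2 := hurec (t0 + s)
            _ ≤ a3 * (a3 ^ s * u t0
                  + η * b2 * ∑ i ∈ Finset.range s, δ (t0 + s - i - 1) * a3 ^ i
                  + η ^ 2 * c2 * ∑ i ∈ Finset.range s, a3 ^ i)
                + η * δ (t0 + s) * b2 + η ^ 2 * c2 := by
                have := mul_le_mul_of_nonneg_left ihu ha3
                linarith
            _ = _ := by rw [hsu, hgeom]; ring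
        · calc r (t0 + (s + 1))
              ≤ a1 * r (t0 + s) + a2 * u (t0 + s) - η * δ (t0 + s) * b1 + η ^ 2 * c1 :=
                hrrec (t0 + s)
            _ ≤ a1 * (a1 ^ s * r t0 + κ s * a2 * u t0
                  - η * ∑ i ∈ Finset.range s, δ (t0 + s - i - 1) * (a1 ^ i * b1 - κ i * a2 * b2)
                  + η ^ 2 * ∑ i ∈ Finset.range s, (a1 ^ i * c1 + κ i * a2 * c2))
                + a2 * (a3 ^ s * u t0
                  + η * b2 * ∑ i ∈ Finset.range s, δ (t0 + s - i - 1) * a3 ^ i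
                  + η ^ 2 * c2 * ∑ i ∈ Finset.range s, a3 ^ i)
                - η * δ (t0 + s) * b1 + η ^ 2 * c1 := by
                have h1 := mul_le_mul_of_nonneg_left ihr ha1
                have h2 := mul_le_mul_of_nonneg_left ihu ha2
                linarith
            _ = _ := by rw [hsr, hcr, hκs]; ring
    have he : t0 + (t1 - t0) = t1 := by omega
    have hr := (key (t1 - t0)).2
    rw [he] at hr
    have hsum : (η / 2) * ∑ i ∈ Finset.range (t1 - t0), δ (t1 - i - 1) * a1 ^ i * b1
        ≤ η * ∑ i ∈ Finset.range (t1 - t0),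
            δ (t1 - i - 1) * (a1 ^ i * b1 - κ i * a2 * b2) := by
      rw [Finset.mul_sum, Finset.mul_sum]
      apply Finset.sum_le_sum
      intro i hi
      have hiE : i < E := lt_of_lt_of_le (Finset.mem_range.mp hi) (by omega)
      have hc := hcond i hiE
      have hδ := hδpos (t1 - i - 1)
      nlinarith [mul_nonneg (mul_nonneg hη.le hδ) (sub_nonneg.mpr hc)]
    linarith
end

section
/- For any r_0, d, T, c_1, c_2 > 0 there exists a step size η with 0 < η ≤ 1/d such that Φ(η) := r_0/(Tη) + η c_1 + η² c_2 ≤ d r_0/T + 2√(r_0 c_1/T) + 2 (r_0² c_2/T²)^{1/3}. In particular, the choice η_0 = min{1/d, √(r_0/(c_1 T)), (r_0/(c_2 T))^{1/3}} satisfies this bound. -/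
/-!
Each of the three candidates `1/d`, `√(u/c₁)`, `(u/c₂)^{1/3}` (with `u = r₀/T`) bounds the
minimum `η` from above, so `η c₁ + η² c₂` is at most its value at the respective candidates, while
`u/η ≤ d u + u/√(u/c₁) + u/(u/c₂)^{1/3}` because `η` is one of them. At `η = (u/c)^{1/(n+1)}` the
terms `u/η` and `ηⁿ c` balance, both being `(uⁿ c)^{1/(n+1)}`, whence the factors `2`.
-/

/-- `Φ` with `u = r₀/T`. -/
noncomputable def stepObjective (u c₁ c₂ η : ℝ) : ℝ := u / η + η * c₁ + η ^ 2 * c₂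

lemma div_min_le_add_div {k x y : ℝ} (hk : 0 ≤ k) (hx : 0 < x) (hy : 0 < y) :
    k / min x y ≤ k / x + k / y := by
  rcases min_choice x y with h | h <;> rw [h]
  · linarith [div_nonneg hk hy.le]
  · linarith [div_nonneg hk hx.le]

lemma div_rpow_add_rpow_pow_mul {u c : ℝ} (hu : 0 < u) (hc : 0 < c) (n : ℕ) :
    u / (u / c) ^ (n + 1 : ℝ)⁻¹ + ((u / c) ^ (n + 1 : ℝ)⁻¹) ^ n * c
      = 2 * (u ^ n * c) ^ (n + 1 : ℝ)⁻¹ := by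
  have hcast : ((n + 1 : ℕ) : ℝ) = n + 1 := by push_cast; ring
  rw [← hcast]
  set η := (u / c) ^ ((n + 1 : ℕ) : ℝ)⁻¹
  have hη_pos : 0 < η := by positivity
  have hη_pow : η ^ (n + 1) = u / c := Real.rpow_inv_natCast_pow (by positivity) n.succ_ne_zero
  have hpow_mul : η ^ n * c = (u ^ n * c) ^ ((n + 1 : ℕ) : ℝ)⁻¹ := by
    have : u ^ n * c = (η ^ n * c) ^ (n + 1) := by
      rw [mul_pow, ← pow_mul, mul_comm n, pow_mul, hη_pow, div_pow]
      field_simp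
      ring
    rw [this, Real.pow_rpow_inv_natCast (by positivity) n.succ_ne_zero]
  have hdiv : u / η = η ^ n * c := by
    rw [div_eq_iff hη_pos.ne']
    calc u = η ^ (n + 1) * c := by rw [hη_pow]; field_simp
      _ = η ^ n * c * η := by ring
  rw [hdiv, hpow_mul]
  ring

lemma stepObjective_min_le {u d c₁ c₂ a b : ℝ} (hu : 0 ≤ u) (hd : 0 < d) (ha : 0 < a)
    (hb : 0 < b) (hc₁ : 0 ≤ c₁) (hc₂ : 0 ≤ c₂) :
    stepObjective u c₁ c₂ (min (1 / d) (min a b))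
      ≤ d * u + (u / a + a * c₁) + (u / b + b ^ 2 * c₂) := by
  set η := min (1 / d) (min a b)
  have hdiv : u / η ≤ d * u + u / a + u / b :=
    calc u / η ≤ u / (1 / d) + u / min a b := div_min_le_add_div hu (by positivity) (by positivity)
      _ ≤ u / (1 / d) + (u / a + u / b) := by gcongr; exact div_min_le_add_div hu ha hb
      _ = d * u + u / a + u / b := by field_simp; ring
  have hηa : η ≤ a := (min_le_right _ _).trans (min_le_left _ _)
  have hηb : η ≤ b := (min_le_right _ _).trans (min_le_right _ _)
  have h₁ : η * c₁ ≤ a * c₁ := mul_le_mul_of_nonneg_right hηa hc₁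
  have h₂ : η ^ 2 * c₂ ≤ b ^ 2 * c₂ := by gcongr
  unfold stepObjective
  linarith

lemma stepObjective_min_sqrt_cbrt_le {u d c₁ c₂ : ℝ} (hu : 0 < u) (hd : 0 < d) (hc₁ : 0 < c₁)
    (hc₂ : 0 < c₂) :
    stepObjective u c₁ c₂ (min (1 / d) (min (√(u / c₁)) ((u / c₂) ^ ((1 : ℝ) / 3))))
      ≤ d * u + 2 * √(u * c₁) + 2 * (u ^ 2 * c₂) ^ ((1 : ℝ) / 3) := by
  have hsqrt := div_rpow_add_rpow_pow_mul hu hc₁ 1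
  have hcbrt := div_rpow_add_rpow_pow_mul hu hc₂ 2
  rw [show ((1 : ℕ) + 1 : ℝ)⁻¹ = 1 / 2 by norm_num, ← Real.sqrt_eq_rpow, ← Real.sqrt_eq_rpow,
    pow_one, pow_one] at hsqrt
  rw [show ((2 : ℕ) + 1 : ℝ)⁻¹ = 1 / 3 by norm_num] at hcbrt
  rw [← hsqrt, ← hcbrt]
  exact stepObjective_min_le hu.le hd (by positivity) (by positivity) hc₁.le hc₂.le

/-- **learning-rate choice I.** For any positive `r0, d, T, c1, c2`
there is a step size `0 < η ≤ 1/d` with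
`Φ(η) = r0/(Tη) + η c1 + η² c2 ≤ d r0 / T + 2√(r0 c1 / T) + 2 (r0² c2 / T²)^{1/3}`.
In particular `η0 = min {1/d, √(r0/(c1 T)), (r0/(c2 T))^{1/3}}` satisfies this. -/
theorem statement11 (r0 d T c1 c2 : ℝ)
    (hr0 : 0 < r0) (hd : 0 < d) (hT : 0 < T) (hc1 : 0 < c1) (hc2 : 0 < c2) :
    (∃ η : ℝ, 0 < η ∧ η ≤ 1 / d ∧
      r0 / (T * η) + η * c1 + η ^ 2 * c2
        ≤ d * r0 / T + 2 * Real.sqrt (r0 * c1 / T)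
          + 2 * (r0 ^ 2 * c2 / T ^ 2) ^ ((1 : ℝ) / 3)) ∧
    (0 < min (1 / d) (min (Real.sqrt (r0 / (c1 * T))) ((r0 / (c2 * T)) ^ ((1 : ℝ) / 3))) ∧
      min (1 / d) (min (Real.sqrt (r0 / (c1 * T))) ((r0 / (c2 * T)) ^ ((1 : ℝ) / 3))) ≤ 1 / d ∧
      r0 / (T * min (1 / d) (min (Real.sqrt (r0 / (c1 * T))) ((r0 / (c2 * T)) ^ ((1 : ℝ) / 3))))
          + min (1 / d) (min (Real.sqrt (r0 / (c1 * T))) ((r0 / (c2 * T)) ^ ((1 : ℝ) / 3))) * c1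
          + (min (1 / d) (min (Real.sqrt (r0 / (c1 * T))) ((r0 / (c2 * T)) ^ ((1 : ℝ) / 3)))) ^ 2 * c2
        ≤ d * r0 / T + 2 * Real.sqrt (r0 * c1 / T)
          + 2 * (r0 ^ 2 * c2 / T ^ 2) ^ ((1 : ℝ) / 3)) := by
  rw [show r0 / (c1 * T) = r0 / T / c1 by ring, show r0 / (c2 * T) = r0 / T / c2 by ring,
    show r0 * c1 / T = r0 / T * c1 by ring, show r0 ^ 2 * c2 / T ^ 2 = (r0 / T) ^ 2 * c2 by ring]
  simp only [div_mul_eq_div_div, mul_div_assoc]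
  have hu : 0 < r0 / T := by positivity
  generalize r0 / T = u at hu ⊢
  set η := min (1 / d) (min (√(u / c1)) ((u / c2) ^ ((1 : ℝ) / 3)))
  have hη_pos : 0 < η := by positivity
  have hbound : stepObjective u c1 c2 η
      ≤ d * u + 2 * √(u * c1) + 2 * (u ^ 2 * c2) ^ ((1 : ℝ) / 3) :=
    stepObjective_min_sqrt_cbrt_le hu hd hc1 hc2
  exact ⟨⟨η, hη_pos, min_le_left _ _, hbound⟩, hη_pos, min_le_left _ _, hbound⟩
end

section
/- Fix δ ∈ [0, 1) and define a sequence (θ_s)_{s≥0} by choosing θ_0 with 2δ ≤ θ_0 ≤ 1+δ and, recursively, θ_{s+1} = √((1+δ)/(1−δ)·θ_s² + θ_s⁴/(4(1−δ)²)) − θ_s²/(2(1−δ)) (the larger root of ((1−θ_{s+1}+δ)/(1−δ))·(1/θ_{s+1}²) = 1/θ_s²). Then: (1) boundedness: 2δ ≤ θ_s ≤ 1+δ for all s ≥ 0; (2) monotonicity: θ_{s+1} ≤ θ_s for all s ≥ 0; (3) contraction: 0 ≤ θ_{s+1} − 2δ ≤ (1−δ)(θ_s − 2δ) for all s ≥ 0,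 and hence θ_s ≤ 2δ + (1−δ)^s (θ_0 − 2δ) for all s; (4) if δ = 0 then θ_s ≤ 2/(s+2) for all s ≥ 0. -/
/-!
Each step `θ_{s+1}` is the nonnegative root of `(1 - δ) t² + θ_s² t = (1 + δ) θ_s²`, whose left
side is strictly increasing in `t ≥ 0`. Hence a bound `θ_{s+1} ≤ u` or `u ≤ θ_{s+1}` with `u ≥ 0`
amounts to the sign of the quadratic at `u`; for `u = 2δ`, `θ_s`, `2δ + (1 - δ)(θ_s - 2δ)` and,
when `δ = 0`, `2/(s + 3)`, this is an elementary polynomial inequality in `θ_s`, and the claims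
follow by induction on `s`.
-/

open Real Set

noncomputable def quadRoot (a b c : ℝ) : ℝ :=
  √(c / a + b ^ 2 / (4 * a ^ 2)) - b / (2 * a)

section QuadRoot

variable {a b c : ℝ}

theorem quadRoot_nonneg (ha : 0 < a) (hc : 0 ≤ c) : 0 ≤ quadRoot a b c := by
  have hsq : (b / (2 * a)) ^ 2 ≤ c / a + b ^ 2 / (4 * a ^ 2) := by
    have : (b / (2 * a)) ^ 2 = b ^ 2 / (4 * a ^ 2) := by ring
    rw [this]
    have : 0 ≤ c / a := by positivity
    linarith
  exact sub_nonneg.2 ((le_abs_self _).trans (abs_le_sqrt hsq))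

theorem quadRoot_spec (ha : 0 < a) (hc : 0 ≤ c) :
    a * quadRoot a b c ^ 2 + b * quadRoot a b c = c := by
  have hD : 0 ≤ c / a + b ^ 2 / (4 * a ^ 2) := by positivity
  have hs := sq_sqrt hD
  unfold quadRoot
  set s := √(c / a + b ^ 2 / (4 * a ^ 2))
  field_simp at hs ⊢
  linear_combination hs

theorem strictMonoOn_quadratic (ha : 0 < a) (hb : 0 ≤ b) :
    StrictMonoOn (fun t ↦ a * t ^ 2 + b * t) (Ici 0) := by
  intro t (ht : 0 ≤ t) u _ htu
  have : 0 < u - t := sub_pos.2 htu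
  nlinarith [mul_pos (mul_pos ha this) (by linarith : 0 < u + t), mul_nonneg hb this.le]

theorem quadRoot_le_iff (ha : 0 < a) (hb : 0 ≤ b) (hc : 0 ≤ c) {u : ℝ} (hu : 0 ≤ u) :
    quadRoot a b c ≤ u ↔ c ≤ a * u ^ 2 + b * u := by
  conv_rhs => rw [← quadRoot_spec (b := b) ha hc]
  exact ((strictMonoOn_quadratic ha hb).le_iff_le (quadRoot_nonneg ha hc) hu).symm

theorem le_quadRoot_iff (ha : 0 < a) (hb : 0 ≤ b) (hc : 0 ≤ c) {u : ℝ} (hu : 0 ≤ u) :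
    u ≤ quadRoot a b c ↔ a * u ^ 2 + b * u ≤ c := by
  conv_rhs => rw [← quadRoot_spec (b := b) ha hc]
  exact ((strictMonoOn_quadratic ha hb).le_iff_le hu (quadRoot_nonneg ha hc)).symm

end QuadRoot

/-- `θ_{s+1} = thetaStep δ θ_s` is the nonnegative root of `(1 - δ) t² + θ_s² t = (1 + δ) θ_s²`,
which is the paper's `((1 - t + δ)/(1 - δ)) / t² = 1 / θ_s²` cleared of denominators. -/
noncomputable def thetaStep (δ x : ℝ) : ℝ :=
  quadRoot (1 - δ) (x ^ 2) ((1 + δ) * x ^ 2)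

section ThetaStep

variable {δ x : ℝ}

theorem thetaStep_eq (δ x : ℝ) :
    thetaStep δ x = √((1 + δ) / (1 - δ) * x ^ 2 + x ^ 4 / (4 * (1 - δ) ^ 2))
      - x ^ 2 / (2 * (1 - δ)) := by
  rw [thetaStep, quadRoot, div_mul_eq_mul_div, ← pow_mul]

theorem thetaStep_le_iff (hδ0 : 0 ≤ δ) (hδ1 : δ < 1) {u : ℝ} (hu : 0 ≤ u) :
    thetaStep δ x ≤ u ↔ (1 + δ) * x ^ 2 ≤ (1 - δ) * u ^ 2 + x ^ 2 * u :=
  quadRoot_le_iff (by linarith) (sq_nonneg x) (by positivity) hu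

theorem le_thetaStep_iff (hδ0 : 0 ≤ δ) (hδ1 : δ < 1) {u : ℝ} (hu : 0 ≤ u) :
    u ≤ thetaStep δ x ↔ (1 - δ) * u ^ 2 + x ^ 2 * u ≤ (1 + δ) * x ^ 2 :=
  le_quadRoot_iff (by linarith) (sq_nonneg x) (by positivity) hu

variable (hδ0 : 0 ≤ δ) (hδ1 : δ < 1) (hx : 2 * δ ≤ x)
include hδ0 hδ1 hx

theorem two_mul_le_thetaStep : 2 * δ ≤ thetaStep δ x := by
  rw [le_thetaStep_iff hδ0 hδ1 (by positivity)]
  nlinarith [mul_le_mul hx hx (by positivity) (by linarith)]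

theorem thetaStep_le_self : thetaStep δ x ≤ x := by
  rw [thetaStep_le_iff hδ0 hδ1 (by linarith)]
  nlinarith [mul_le_mul_of_nonneg_left hx (sq_nonneg x)]

theorem thetaStep_sub_le : thetaStep δ x - 2 * δ ≤ (1 - δ) * (x - 2 * δ) := by
  rw [sub_le_iff_le_add, add_comm, thetaStep_le_iff hδ0 hδ1 (by nlinarith)]
  -- the gap is `(1 - δ) (x - 2δ)² (x + δ²)`
  nlinarith [mul_nonneg (mul_nonneg (sub_nonneg.2 hδ1.le) (sq_nonneg (x - 2 * δ)))
    (by nlinarith : 0 ≤ x + δ ^ 2)]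

end ThetaStep

theorem thetaStep_zero_le {x n : ℝ} (hn : 0 ≤ n) (hx : 0 ≤ x) (hxn : x ≤ 2 / (n + 2)) :
    thetaStep 0 x ≤ 2 / (n + 1 + 2) := by
  rw [thetaStep_le_iff le_rfl zero_lt_one (by positivity)]
  have hx2 : x ^ 2 ≤ (2 / (n + 2)) ^ 2 := pow_le_pow_left₀ hx hxn 2
  have hu : 2 / (n + 1 + 2) ≤ 1 := by rw [div_le_one (by positivity)]; linarith
  have key : (2 / (n + 2)) ^ 2 * (1 - 2 / (n + 1 + 2)) ≤ (2 / (n + 1 + 2)) ^ 2 := by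
    -- after clearing denominators: `(n + 1) (n + 3) ≤ (n + 2)²`
    field_simp
    nlinarith
  nlinarith [mul_le_mul_of_nonneg_right hx2 (sub_nonneg.2 hu)]

/-- Fix `δ ∈ [0,1)` and a sequence `(θ_s)` with `2δ ≤ θ_0 ≤ 1+δ` and
`θ_{s+1} = √((1+δ)/(1-δ)·θ_s² + θ_s⁴/(4(1-δ)²)) - θ_s²/(2(1-δ))` (the larger root of
`((1-θ_{s+1}+δ)/(1-δ))/θ_{s+1}² = 1/θ_s²`).  Then:
(1) `2δ ≤ θ_s ≤ 1+δ` for all `s`; (2) `θ_{s+1} ≤ θ_s`;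
(3) `0 ≤ θ_{s+1} - 2δ ≤ (1-δ)(θ_s - 2δ)`, hence `θ_s ≤ 2δ + (1-δ)^s (θ_0 - 2δ)`;
(4) if `δ = 0` then `θ_s ≤ 2/(s+2)`. -/
theorem statement19 (δ : ℝ) (hδ0 : 0 ≤ δ) (hδ1 : δ < 1)
    (θ : ℕ → ℝ)
    (hθ0l : 2 * δ ≤ θ 0) (hθ0u : θ 0 ≤ 1 + δ)
    (hrec : ∀ s : ℕ,
      θ (s + 1) =
        Real.sqrt ((1 + δ) / (1 - δ) * θ s ^ 2 + θ s ^ 4 / (4 * (1 - δ) ^ 2))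
          - θ s ^ 2 / (2 * (1 - δ))) :
    (∀ s : ℕ, 2 * δ ≤ θ s ∧ θ s ≤ 1 + δ) ∧
    (∀ s : ℕ, θ (s + 1) ≤ θ s) ∧
    (∀ s : ℕ, 0 ≤ θ (s + 1) - 2 * δ ∧ θ (s + 1) - 2 * δ ≤ (1 - δ) * (θ s - 2 * δ)) ∧
    (∀ s : ℕ, θ s ≤ 2 * δ + (1 - δ) ^ s * (θ 0 - 2 * δ)) ∧
    (δ = 0 → ∀ s : ℕ, θ s ≤ 2 / ((s : ℝ) + 2)) := by
  have hstep (s : ℕ) : θ (s + 1) = thetaStep δ (θ s) := (hrec s).trans (thetaStep_eq δ _).symm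
  have lower (s : ℕ) : 2 * δ ≤ θ s := by
    induction s with
    | zero => exact hθ0l
    | succ s ih => exact hstep s ▸ two_mul_le_thetaStep hδ0 hδ1 ih
  have mono (s : ℕ) : θ (s + 1) ≤ θ s := hstep s ▸ thetaStep_le_self hδ0 hδ1 (lower s)
  have contr (s : ℕ) : θ (s + 1) - 2 * δ ≤ (1 - δ) * (θ s - 2 * δ) :=
    hstep s ▸ thetaStep_sub_le hδ0 hδ1 (lower s)
  refine ⟨fun s ↦ ⟨lower s, (antitone_nat_of_succ_le mono (Nat.zero_le s)).trans hθ0u⟩, mono,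
    fun s ↦ ⟨sub_nonneg.2 (lower (s + 1)), contr s⟩, fun s ↦ ?_, ?_⟩
  · have := le_geom (u := fun k ↦ θ k - 2 * δ) (by linarith) s fun k _ ↦ contr k
    linarith
  · rintro rfl s
    induction s with
    | zero => norm_num; linarith
    | succ s ih =>
      rw [hstep, Nat.cast_succ]
      exact thetaStep_zero_le s.cast_nonneg (by simpa using lower s) (by simpa using ih)
end
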